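/- Let f = (f₀, f₁) : (A, Γ) → (B, Σ) be a map of commutative Hopf algebroids. Then f* : (Spec B, Spec Σ) → (Spec A, Spec Γ) is an internal equivalence in the fpqc topology if and only if (i) the canonical map B ⊗_A Γ ⊗_A B → Σ, b ⊗ γ ⊗ b' ↦ η_L(b)·f₁(γ)·η_R(b'), is a ring isomorphism, and (ii) there exists a ring map g : B ⊗_A Γ → C such that the composite g ∘ (f₀ ⊗ η_R) : A → C makes C a faithfully flat A-algebra. -/

import Mathlib

set_option maxHeartbeats 1000000

universe u

open TensorProduct

/-- A commutative Hopf algebroid `(A, Γ)`, encoded (following Haynes Miller, as recalled in the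
paper) as a pair of commutative rings such that `(Spec A, Spec Γ)` is a presheaf of groupoids:
we record the structure ring maps `ηL, ηR : A → Γ`, `ε : Γ → A`, the conjugation `c : Γ → Γ`,
and the composition operation on points `comp`, natural in `R`, which is the functor-of-points
incarnation of the diagonal `Δ`.  A point `α : Γ →+* R` is a morphism from `α ∘ ηL` to
`α ∘ ηR` in the groupoid `(Spec A, Spec Γ)(R)`. -/
structure HopfAlgebroid (A : Type u) (Γ : Type u) [CommRing A] [CommRing Γ] : Type (u + 1) where
  ηL : A →+* Γ
  ηR : A →+* Γ
  ε : Γ →+* A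
  c : Γ →+* Γ
  /-- composition of the morphisms `α : x → y` and `β : y → z`, giving `β ∘ α : x → z`. -/
  comp : ∀ {R : Type u} [CommRing R] (α β : Γ →+* R), α.comp ηR = β.comp ηL → (Γ →+* R)
  ε_ηL : ε.comp ηL = RingHom.id A
  ε_ηR : ε.comp ηR = RingHom.id A
  c_ηL : c.comp ηL = ηR
  c_ηR : c.comp ηR = ηL
  c_c : c.comp c = RingHom.id Γ
  comp_ηL : ∀ {R : Type u} [CommRing R] (α β : Γ →+* R) (h : α.comp ηR = β.comp ηL),
    (comp α β h).comp ηL = α.comp ηL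
  comp_ηR : ∀ {R : Type u} [CommRing R] (α β : Γ →+* R) (h : α.comp ηR = β.comp ηL),
    (comp α β h).comp ηR = β.comp ηR
  comp_natural : ∀ {R S : Type u} [CommRing R] [CommRing S] (g : R →+* S) (α β : Γ →+* R)
    (h : α.comp ηR = β.comp ηL) (h' : (g.comp α).comp ηR = (g.comp β).comp ηL),
    g.comp (comp α β h) = comp (g.comp α) (g.comp β) h'
  id_comp : ∀ {R : Type u} [CommRing R] (α : Γ →+* R)
    (h : ((α.comp ηL).comp ε).comp ηR = α.comp ηL), comp ((α.comp ηL).comp ε) α h = α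
  comp_id : ∀ {R : Type u} [CommRing R] (α : Γ →+* R)
    (h : α.comp ηR = ((α.comp ηR).comp ε).comp ηL), comp α ((α.comp ηR).comp ε) h = α
  comp_assoc : ∀ {R : Type u} [CommRing R] (α β γ : Γ →+* R)
    (h1 : α.comp ηR = β.comp ηL) (h2 : (comp α β h1).comp ηR = γ.comp ηL)
    (h3 : β.comp ηR = γ.comp ηL) (h4 : α.comp ηR = (comp β γ h3).comp ηL),
    comp (comp α β h1) γ h2 = comp α (comp β γ h3) h4
  comp_inv : ∀ {R : Type u} [CommRing R] (α : Γ →+* R)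
    (h : α.comp ηR = (α.comp c).comp ηL), comp α (α.comp c) h = (α.comp ηL).comp ε

/-- A map of commutative Hopf algebroids `(A, Γ) → (B, Σ)`: a pair of ring maps commuting with
all the structure maps. -/
structure HopfAlgebroidMap {A Γ B Sg : Type u} [CommRing A] [CommRing Γ] [CommRing B]
    [CommRing Sg] (H : HopfAlgebroid A Γ) (K : HopfAlgebroid B Sg) : Type (u + 1) where
  f₀ : A →+* B
  f₁ : Γ →+* Sg
  ηL_comm : f₁.comp H.ηL = K.ηL.comp f₀
  ηR_comm : f₁.comp H.ηR = K.ηR.comp f₀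
  ε_comm : f₀.comp H.ε = K.ε.comp f₁
  c_comm : f₁.comp H.c = K.c.comp f₁
  comp_comm : ∀ {R : Type u} [CommRing R] (α β : Sg →+* R) (h : α.comp K.ηR = β.comp K.ηL)
    (h' : (α.comp f₁).comp H.ηR = (β.comp f₁).comp H.ηL),
    (K.comp α β h).comp f₁ = H.comp (α.comp f₁) (β.comp f₁) h'

section Tensors

variable {A Γ B : Type u} [CommRing A] [CommRing Γ] [CommRing B]

/-- The tensor product `Γ ⊗[A] B`, where `Γ` is an `A`-algebra via `ηR` and `B` via `f₀`. -/
def GammaB (H : HopfAlgebroid A Γ) (f₀ : A →+* B) : Type u :=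
  letI := H.ηR.toAlgebra
  letI := f₀.toAlgebra
  Γ ⊗[A] B

noncomputable instance (H : HopfAlgebroid A Γ) (f₀ : A →+* B) : CommRing (GammaB H f₀) :=
  letI := H.ηR.toAlgebra
  letI := f₀.toAlgebra
  (inferInstance : CommRing (Γ ⊗[A] B))

/-- The inclusion `Γ → Γ ⊗[A] B`. -/
noncomputable def inclGamma (H : HopfAlgebroid A Γ) (f₀ : A →+* B) : Γ →+* GammaB H f₀ :=
  letI := H.ηR.toAlgebra
  letI := f₀.toAlgebra
  Algebra.TensorProduct.includeLeftRingHom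

/-- The inclusion `B → Γ ⊗[A] B`. -/
noncomputable def inclB (H : HopfAlgebroid A Γ) (f₀ : A →+* B) : B →+* GammaB H f₀ :=
  letI := H.ηR.toAlgebra
  letI := f₀.toAlgebra
  (Algebra.TensorProduct.includeRight : B →ₐ[A] Γ ⊗[A] B).toRingHom

/-- The triple tensor product `B ⊗[A] Γ ⊗[A] B`, realized as `B ⊗[A] (Γ ⊗[A] B)`, where the
left copy of `B` is an `A`-algebra via `f₀`, the left `A`-action on `Γ` is via `ηL`
and the right one via `ηR`. -/
def BGammaB (H : HopfAlgebroid A Γ) (f₀ : A →+* B) : Type u :=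
  letI := f₀.toAlgebra
  letI := ((inclGamma H f₀).comp H.ηL).toAlgebra
  B ⊗[A] GammaB H f₀

noncomputable instance (H : HopfAlgebroid A Γ) (f₀ : A →+* B) : CommRing (BGammaB H f₀) :=
  letI := f₀.toAlgebra
  letI := ((inclGamma H f₀).comp H.ηL).toAlgebra
  (inferInstance : CommRing (B ⊗[A] GammaB H f₀))

/-- The inclusion of `B` as the left tensor factor of `B ⊗[A] Γ ⊗[A] B`. -/
noncomputable def incl₁ (H : HopfAlgebroid A Γ) (f₀ : A →+* B) : B →+* BGammaB H f₀ :=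
  letI := f₀.toAlgebra
  letI := ((inclGamma H f₀).comp H.ηL).toAlgebra
  Algebra.TensorProduct.includeLeftRingHom

/-- The inclusion of `Γ` as the middle tensor factor of `B ⊗[A] Γ ⊗[A] B`. -/
noncomputable def incl₂ (H : HopfAlgebroid A Γ) (f₀ : A →+* B) : Γ →+* BGammaB H f₀ :=
  letI := f₀.toAlgebra
  letI := ((inclGamma H f₀).comp H.ηL).toAlgebra
  ((Algebra.TensorProduct.includeRight :
      GammaB H f₀ →ₐ[A] B ⊗[A] GammaB H f₀).toRingHom).comp (inclGamma H f₀)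

/-- The inclusion of `B` as the right tensor factor of `B ⊗[A] Γ ⊗[A] B`. -/
noncomputable def incl₃ (H : HopfAlgebroid A Γ) (f₀ : A →+* B) : B →+* BGammaB H f₀ :=
  letI := f₀.toAlgebra
  letI := ((inclGamma H f₀).comp H.ηL).toAlgebra
  ((Algebra.TensorProduct.includeRight :
      GammaB H f₀ →ₐ[A] B ⊗[A] GammaB H f₀).toRingHom).comp (inclB H f₀)

end Tensors

section CanonicalMap

variable {A Γ B Sg : Type u} [CommRing A] [CommRing Γ] [CommRing B] [CommRing Sg]
variable {H : HopfAlgebroid A Γ} {K : HopfAlgebroid B Sg}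

/-- Intermediate step: the ring map `Γ ⊗[A] B → Σ`, `γ ⊗ b' ↦ f₁(γ) · ηR(b')`. -/
noncomputable def canonicalMapStep (φ : HopfAlgebroidMap H K) : GammaB H φ.f₀ →+* Sg :=
  letI := φ.f₀.toAlgebra
  letI := H.ηR.toAlgebra
  letI : Algebra A Sg := (φ.f₁.comp H.ηR).toAlgebra
  (Algebra.TensorProduct.productMap
    (⟨φ.f₁, fun _ => rfl⟩ : Γ →ₐ[A] Sg)
    (⟨K.ηR, fun a => (RingHom.congr_fun φ.ηR_comm a).symm⟩ : B →ₐ[A] Sg)).toRingHom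

lemma canonicalMapStep_incl (φ : HopfAlgebroidMap H K) (x : Γ) :
    canonicalMapStep φ ((inclGamma H φ.f₀) x) = φ.f₁ x := by
  letI := φ.f₀.toAlgebra
  letI := H.ηR.toAlgebra
  letI : Algebra A Sg := (φ.f₁.comp H.ηR).toAlgebra
  unfold canonicalMapStep inclGamma
  show (Algebra.TensorProduct.productMap _ _) (x ⊗ₜ[A] (1 : B)) = φ.f₁ x
  rw [Algebra.TensorProduct.productMap_left_apply]
  rfl

/-- The canonical ring map `B ⊗[A] Γ ⊗[A] B → Σ`,
`b ⊗ γ ⊗ b' ↦ ηL(b) · f₁(γ) · ηR(b')`, associated to a map of Hopf algebroids. -/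
noncomputable def canonicalMap (φ : HopfAlgebroidMap H K) : BGammaB H φ.f₀ →+* Sg :=
  letI := φ.f₀.toAlgebra
  letI := ((inclGamma H φ.f₀).comp H.ηL).toAlgebra
  letI : Algebra A Sg := (K.ηL.comp φ.f₀).toAlgebra
  (Algebra.TensorProduct.productMap
    (⟨K.ηL, fun _ => rfl⟩ : B →ₐ[A] Sg)
    (⟨canonicalMapStep φ, fun r => by
      show canonicalMapStep φ ((inclGamma H φ.f₀) (H.ηL r)) = (K.ηL.comp φ.f₀) r
      rw [canonicalMapStep_incl]
      exact RingHom.congr_fun φ.ηL_comm r⟩ : GammaB H φ.f₀ →ₐ[A] Sg)).toRingHom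

end CanonicalMap

section BGammaSection

variable {A Γ B : Type u} [CommRing A] [CommRing Γ] [CommRing B]

/-- The tensor product `B ⊗[A] Γ`, where `B` is an `A`-algebra via `f₀` and `Γ` via `ηL`. -/
def BGamma (H : HopfAlgebroid A Γ) (f₀ : A →+* B) : Type u :=
  letI := f₀.toAlgebra
  letI := H.ηL.toAlgebra
  B ⊗[A] Γ

noncomputable instance (H : HopfAlgebroid A Γ) (f₀ : A →+* B) : CommRing (BGamma H f₀) :=
  letI := f₀.toAlgebra
  letI := H.ηL.toAlgebra
  (inferInstance : CommRing (B ⊗[A] Γ))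

/-- The inclusion `Γ → B ⊗[A] Γ` of the right tensor factor. -/
noncomputable def inclGammaRight (H : HopfAlgebroid A Γ) (f₀ : A →+* B) : Γ →+* BGamma H f₀ :=
  letI := f₀.toAlgebra
  letI := H.ηL.toAlgebra
  (Algebra.TensorProduct.includeRight : Γ →ₐ[A] B ⊗[A] Γ).toRingHom

/-- The map `f₀ ⊗ ηR : A → B ⊗[A] Γ`, `a ↦ 1 ⊗ ηR(a)`. -/
noncomputable def unitBGamma (H : HopfAlgebroid A Γ) (f₀ : A →+* B) : A →+* BGamma H f₀ :=
  (inclGammaRight H f₀).comp H.ηR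

end BGammaSection

/-- The sheaf-theoretic essential image, in the fpqc topology, of
`f* : (Spec B, Spec Σ) → (Spec A, Spec Γ)` is all of `Spec A`: every point `y : A →+* R`
admits a finite family `{R → S i}` of flat maps whose product is faithfully flat over `R`
such that each restriction of `y` is isomorphic, in the groupoid `(Spec A, Spec Γ)(S i)`,
to a point in the image of `f*` (i.e. of the form `x ∘ f₀` for some `x : B →+* S i`). -/
def FpqcEssentiallySurjective {A Γ B Sg : Type u} [CommRing A] [CommRing Γ] [CommRing B]
    [CommRing Sg] {H : HopfAlgebroid A Γ} {K : HopfAlgebroid B Sg}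
    (φ : HopfAlgebroidMap H K) : Prop :=
  ∀ (R : Type u) [CommRing R] (y : A →+* R),
    ∃ (ι : Type u) (_ : Fintype ι) (S : ι → CommRingCat.{u}) (f : ∀ i, R →+* S i),
      (∀ i, @Module.Flat R (S i) _ _ ((f i).toAlgebra.toModule)) ∧
      (@Module.FaithfullyFlat R (∀ i, S i) _ _ ((Pi.ringHom f).toAlgebra.toModule)) ∧
      (∀ i, ∃ (x : B →+* S i) (α : Γ →+* S i),
        α.comp H.ηL = x.comp φ.f₀ ∧ α.comp H.ηR = (f i).comp y)

/-!
Ring maps out of `B ⊗[A] Γ ⊗[A] B` are the triples `(x, β, y)` in which `β` is a morphism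
`x ∘ f₀ → y ∘ f₀` of `(Spec A, Spec Γ)`, and the canonical map sends a morphism `α` of
`(Spec B, Spec Σ)` to the triple `(α ∘ ηL, α ∘ f₁, α ∘ ηR)`. Hence `f*` is fully faithful iff
precomposition with the canonical map is bijective on points with values in every ring, which by
Yoneda means that the canonical map is an isomorphism.

Likewise, ring maps out of `B ⊗[A] Γ` are the pairs `(x, β)` with `β` a morphism out of `x ∘ f₀`,
whose target is read off through `f₀ ⊗ ηR`. A cover `{A → S i}` on which the universal point
`id : A → A` becomes isomorphic to points in the image of `f*` thus yields such a pair with values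
in the faithfully flat `A`-algebra `∏ S i`. Conversely, given `g`, any point `y : A → R` is
trivialized by the single faithfully flat map `R → R ⊗[A] C`.
-/

namespace Algebra.TensorProduct

variable {A B C R : Type*} [CommRing A] [CommRing B] [CommRing C] [CommRing R]
  [Algebra A B] [Algebra A C]

noncomputable def liftRingHom (f : B →+* R) (g : C →+* R)
    (h : f.comp (algebraMap A B) = g.comp (algebraMap A C)) : B ⊗[A] C →+* R :=
  letI := (f.comp (algebraMap A B)).toAlgebra
  (productMap (⟨f, fun _ => rfl⟩ : B →ₐ[A] R)
    ⟨g, fun a => (RingHom.congr_fun h a).symm⟩).toRingHom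

variable (f : B →+* R) (g : C →+* R) (h : f.comp (algebraMap A B) = g.comp (algebraMap A C))

@[simp]
lemma liftRingHom_comp_includeLeftRingHom :
    (liftRingHom f g h).comp includeLeftRingHom = f := by
  let := (f.comp (algebraMap A B)).toAlgebra
  ext b
  exact productMap_left_apply _ _ b

@[simp]
lemma liftRingHom_comp_includeRight :
    (liftRingHom f g h).comp (includeRight : C →ₐ[A] B ⊗[A] C).toRingHom = g := by
  let := (f.comp (algebraMap A B)).toAlgebra
  ext c
  exact productMap_right_apply _ _ c

end Algebra.TensorProduct

lemma RingHom.FaithfullyFlat.pi_unique {R S : Type u} [CommRing R] [CommRing S] {f : R →+* S}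
    (hf : f.FaithfullyFlat) (ι : Type u) [Unique ι] :
    (RingHom.pi fun _ : ι => f).FaithfullyFlat := by
  let e := RingEquiv.piUnique fun _ : ι => S
  have : RingHom.pi (fun _ : ι => f) = (e.symm : S →+* _).comp f := by
    ext r i
    rfl
  rw [this]
  exact RingHom.FaithfullyFlat.stableUnderComposition _ _ hf (.of_bijective e.symm.bijective)

theorem RingHom.bijective_iff_forall_comp {T S : Type u} [CommRing T] [CommRing S]
    (κ : T →+* S) :
    Function.Bijective κ ↔
      (∀ (R : Type u) [CommRing R] (α β : S →+* R), α.comp κ = β.comp κ → α = β) ∧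
      ∀ (R : Type u) [CommRing R] (τ : T →+* R), ∃ α : S →+* R, α.comp κ = τ := by
  refine ⟨fun hκ => ⟨fun R _ α β h => ?_, fun R _ τ => ?_⟩, fun ⟨hepi, hsplit⟩ => ?_⟩
  · ext s
    obtain ⟨t, rfl⟩ := hκ.2 s
    exact RingHom.congr_fun h t
  · let e := RingEquiv.ofBijective κ hκ
    exact ⟨τ.comp e.symm.toRingHom, RingHom.ext fun t => congrArg τ (e.symm_apply_apply t)⟩
  · obtain ⟨α, hα⟩ := hsplit T (RingHom.id T)
    have hα' : κ.comp α = RingHom.id S :=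
      hepi S _ _ (by rw [RingHom.comp_assoc, hα, RingHom.comp_id, RingHom.id_comp])
    exact Function.bijective_iff_has_inverse.mpr ⟨α, RingHom.congr_fun hα, RingHom.congr_fun hα'⟩

section Points

open Algebra.TensorProduct

variable {A Γ B : Type u} [CommRing A] [CommRing Γ] [CommRing B]
  (H : HopfAlgebroid A Γ) (f₀ : A →+* B) {R : Type*} [CommRing R]

lemma inclGamma_comp_ηR : (inclGamma H f₀).comp H.ηR = (inclB H f₀).comp f₀ := by
  let := H.ηR.toAlgebra
  let := f₀.toAlgebra
  exact includeLeftRingHom_comp_algebraMap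

lemma incl₂_comp_ηL : (incl₂ H f₀).comp H.ηL = (incl₁ H f₀).comp f₀ := by
  let := f₀.toAlgebra
  let := ((inclGamma H f₀).comp H.ηL).toAlgebra
  exact includeLeftRingHom_comp_algebraMap.symm

lemma incl₂_comp_ηR : (incl₂ H f₀).comp H.ηR = (incl₃ H f₀).comp f₀ := by
  let := f₀.toAlgebra
  let := ((inclGamma H f₀).comp H.ηL).toAlgebra
  exact congrArg (includeRight : GammaB H f₀ →ₐ[A] B ⊗[A] GammaB H f₀).toRingHom.comp
    (inclGamma_comp_ηR H f₀)

lemma BGammaB.hom_ext {ψ χ : BGammaB H f₀ →+* R}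
    (h₁ : ψ.comp (incl₁ H f₀) = χ.comp (incl₁ H f₀))
    (h₂ : ψ.comp (incl₂ H f₀) = χ.comp (incl₂ H f₀))
    (h₃ : ψ.comp (incl₃ H f₀) = χ.comp (incl₃ H f₀)) : ψ = χ := by
  let := f₀.toAlgebra
  let := H.ηR.toAlgebra
  let := ((inclGamma H f₀).comp H.ηL).toAlgebra
  exact ringHom_ext h₁ (ringHom_ext h₂ h₃)

noncomputable def BGammaB.lift {H : HopfAlgebroid A Γ} {f₀ : A →+* B} (x y : B →+* R)
    (β : Γ →+* R) (hL : β.comp H.ηL = x.comp f₀) (hR : β.comp H.ηR = y.comp f₀) :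
    BGammaB H f₀ →+* R :=
  letI := f₀.toAlgebra
  letI := H.ηR.toAlgebra
  letI := ((inclGamma H f₀).comp H.ηL).toAlgebra
  liftRingHom x (liftRingHom β y hR) <| RingHom.ext fun a =>
    (RingHom.congr_fun hL a).symm.trans
      (RingHom.congr_fun (liftRingHom_comp_includeLeftRingHom β y hR) (H.ηL a)).symm

variable {H f₀} (x y : B →+* R) (β : Γ →+* R) (hL : β.comp H.ηL = x.comp f₀)
  (hR : β.comp H.ηR = y.comp f₀)

lemma BGammaB.lift_comp_incl₁ : (BGammaB.lift x y β hL hR).comp (incl₁ H f₀) = x := by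
  let := f₀.toAlgebra
  let := H.ηR.toAlgebra
  let := ((inclGamma H f₀).comp H.ηL).toAlgebra
  exact liftRingHom_comp_includeLeftRingHom _ _ _

lemma BGammaB.lift_comp_incl₂ : (BGammaB.lift x y β hL hR).comp (incl₂ H f₀) = β := by
  let := f₀.toAlgebra
  let := H.ηR.toAlgebra
  let := ((inclGamma H f₀).comp H.ηL).toAlgebra
  ext γ
  exact (RingHom.congr_fun
    (liftRingHom_comp_includeRight (C := GammaB H f₀) x (liftRingHom β y hR) _)
    (inclGamma H f₀ γ)).trans (RingHom.congr_fun (liftRingHom_comp_includeLeftRingHom β y hR) γ)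

lemma BGammaB.lift_comp_incl₃ : (BGammaB.lift x y β hL hR).comp (incl₃ H f₀) = y := by
  let := f₀.toAlgebra
  let := H.ηR.toAlgebra
  let := ((inclGamma H f₀).comp H.ηL).toAlgebra
  ext b
  exact (RingHom.congr_fun
    (liftRingHom_comp_includeRight (C := GammaB H f₀) x (liftRingHom β y hR) _)
    (inclB H f₀ b)).trans (RingHom.congr_fun (liftRingHom_comp_includeRight β y hR) b)

end Points

namespace HopfAlgebroidMap

variable {A Γ B Sg : Type u} [CommRing A] [CommRing Γ] [CommRing B] [CommRing Sg]
  {H : HopfAlgebroid A Γ} {K : HopfAlgebroid B Sg} (φ : HopfAlgebroidMap H K)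

lemma canonicalMap_eq_lift :
    canonicalMap φ = BGammaB.lift K.ηL K.ηR φ.f₁ φ.ηL_comm φ.ηR_comm :=
  rfl

lemma canonicalMap_comp_incl₁ : (canonicalMap φ).comp (incl₁ H φ.f₀) = K.ηL := by
  rw [canonicalMap_eq_lift, BGammaB.lift_comp_incl₁]

lemma canonicalMap_comp_incl₂ : (canonicalMap φ).comp (incl₂ H φ.f₀) = φ.f₁ := by
  rw [canonicalMap_eq_lift, BGammaB.lift_comp_incl₂]

lemma canonicalMap_comp_incl₃ : (canonicalMap φ).comp (incl₃ H φ.f₀) = K.ηR := by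
  rw [canonicalMap_eq_lift, BGammaB.lift_comp_incl₃]

lemma comp_canonicalMap_eq_iff {R : Type*} [CommRing R] (α : Sg →+* R)
    (ψ : BGammaB H φ.f₀ →+* R) :
    α.comp (canonicalMap φ) = ψ ↔
      α.comp K.ηL = ψ.comp (incl₁ H φ.f₀) ∧ α.comp K.ηR = ψ.comp (incl₃ H φ.f₀) ∧
        α.comp φ.f₁ = ψ.comp (incl₂ H φ.f₀) := by
  rw [← canonicalMap_comp_incl₁ φ, ← canonicalMap_comp_incl₂ φ, ← canonicalMap_comp_incl₃ φ]
  simp only [← RingHom.comp_assoc]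
  exact ⟨by rintro rfl; exact ⟨rfl, rfl, rfl⟩, fun ⟨h₁, h₃, h₂⟩ => BGammaB.hom_ext _ _ h₁ h₂ h₃⟩

lemma faithful_iff :
    (∀ (R : Type u) [CommRing R] (α β : Sg →+* R),
        α.comp K.ηL = β.comp K.ηL → α.comp K.ηR = β.comp K.ηR →
        α.comp φ.f₁ = β.comp φ.f₁ → α = β) ↔
      ∀ (R : Type u) [CommRing R] (α β : Sg →+* R),
        α.comp (canonicalMap φ) = β.comp (canonicalMap φ) → α = β := by
  refine forall_congr' fun R => forall_congr' fun _ => forall_congr' fun α =>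
    forall_congr' fun β => ?_
  rw [comp_canonicalMap_eq_iff, RingHom.comp_assoc, RingHom.comp_assoc, RingHom.comp_assoc,
    canonicalMap_comp_incl₁, canonicalMap_comp_incl₂, canonicalMap_comp_incl₃]
  simp only [and_imp]

lemma full_iff :
    (∀ (R : Type u) [CommRing R] (x y : B →+* R) (β : Γ →+* R),
        β.comp H.ηL = x.comp φ.f₀ → β.comp H.ηR = y.comp φ.f₀ →
        ∃ α : Sg →+* R, α.comp K.ηL = x ∧ α.comp K.ηR = y ∧ α.comp φ.f₁ = β) ↔
      ∀ (R : Type u) [CommRing R] (τ : BGammaB H φ.f₀ →+* R),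
        ∃ α : Sg →+* R, α.comp (canonicalMap φ) = τ := by
  refine forall_congr' fun R => forall_congr' fun _ =>
    ⟨fun hfull τ => ?_, fun hsplit x y β hL hR => ?_⟩
  · simp only [comp_canonicalMap_eq_iff]
    refine hfull _ _ _ ?_ ?_
    · rw [RingHom.comp_assoc, incl₂_comp_ηL, RingHom.comp_assoc]
    · rw [RingHom.comp_assoc, incl₂_comp_ηR, RingHom.comp_assoc]
  · obtain ⟨α, hα⟩ := hsplit (BGammaB.lift x y β hL hR)
    rw [comp_canonicalMap_eq_iff, BGammaB.lift_comp_incl₁, BGammaB.lift_comp_incl₂,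
      BGammaB.lift_comp_incl₃] at hα
    exact ⟨α, hα⟩

end HopfAlgebroidMap

section BGammaPoints

open Algebra.TensorProduct

variable {A Γ B : Type u} [CommRing A] [CommRing Γ] [CommRing B]

noncomputable def inclBLeft (H : HopfAlgebroid A Γ) (f₀ : A →+* B) : B →+* BGamma H f₀ :=
  letI := f₀.toAlgebra
  letI := H.ηL.toAlgebra
  includeLeftRingHom

lemma inclGammaRight_comp_ηL (H : HopfAlgebroid A Γ) (f₀ : A →+* B) :
    (inclGammaRight H f₀).comp H.ηL = (inclBLeft H f₀).comp f₀ := by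
  let := f₀.toAlgebra
  let := H.ηL.toAlgebra
  exact includeLeftRingHom_comp_algebraMap.symm

variable {H : HopfAlgebroid A Γ} {f₀ : A →+* B} {R : Type*} [CommRing R]

noncomputable def BGamma.lift (x : B →+* R) (α : Γ →+* R) (h : α.comp H.ηL = x.comp f₀) :
    BGamma H f₀ →+* R :=
  letI := f₀.toAlgebra
  letI := H.ηL.toAlgebra
  liftRingHom x α h.symm

lemma BGamma.lift_comp_unitBGamma (x : B →+* R) (α : Γ →+* R) (h : α.comp H.ηL = x.comp f₀) :
    (BGamma.lift x α h).comp (unitBGamma H f₀) = α.comp H.ηR := by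
  let := f₀.toAlgebra
  let := H.ηL.toAlgebra
  rw [unitBGamma, ← RingHom.comp_assoc]
  exact congrArg (RingHom.comp · H.ηR) (liftRingHom_comp_includeRight (C := Γ) x α h.symm)

end BGammaPoints

namespace HopfAlgebroidMap

open Algebra.TensorProduct

variable {A Γ B Sg : Type u} [CommRing A] [CommRing Γ] [CommRing B] [CommRing Sg]
  {H : HopfAlgebroid A Γ} {K : HopfAlgebroid B Sg} (φ : HopfAlgebroidMap H K)

theorem exists_faithfullyFlat_of_fpqcEssentiallySurjective (h : FpqcEssentiallySurjective φ) :
    ∃ (C : CommRingCat.{u}) (g : BGamma H φ.f₀ →+* C),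
      (g.comp (unitBGamma H φ.f₀)).FaithfullyFlat := by
  obtain ⟨ι, _, S, f, -, hff, hpts⟩ := h A (RingHom.id A)
  choose x α hL hR using hpts
  refine ⟨CommRingCat.of (∀ i, S i), RingHom.pi fun i => BGamma.lift (x i) (α i) (hL i), ?_⟩
  have hunit : (RingHom.pi fun i => BGamma.lift (x i) (α i) (hL i)).comp (unitBGamma H φ.f₀) =
      RingHom.pi f := by
    ext a i
    exact RingHom.congr_fun ((BGamma.lift_comp_unitBGamma _ _ (hL i)).trans (hR i)) a
  rw [hunit]
  exact hff

theorem fpqcEssentiallySurjective_of_faithfullyFlat {C : Type u} [CommRing C]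
    (g : BGamma H φ.f₀ →+* C) (hg : (g.comp (unitBGamma H φ.f₀)).FaithfullyFlat) :
    FpqcEssentiallySurjective φ := by
  intro R _ y
  let : Algebra A R := y.toAlgebra
  let : Algebra A C := (g.comp (unitBGamma H φ.f₀)).toAlgebra
  have : Module.FaithfullyFlat A C := hg
  let c : BGamma H φ.f₀ →+* R ⊗[A] C := (includeRight : C →ₐ[A] R ⊗[A] C).toRingHom.comp g
  refine ⟨PUnit, inferInstance, fun _ => CommRingCat.of (R ⊗[A] C),
    fun _ => algebraMap R (R ⊗[A] C), fun _ => RingHom.flat_algebraMap_iff.mpr inferInstance,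
    (RingHom.faithfullyFlat_algebraMap_iff.mpr inferInstance).pi_unique PUnit,
    fun _ => ⟨c.comp (inclBLeft H φ.f₀), c.comp (inclGammaRight H φ.f₀), ?_, ?_⟩⟩
  · rw [RingHom.comp_assoc, inclGammaRight_comp_ηL]
    rfl
  · ext a
    exact (includeRight.commutes a).trans (IsScalarTower.algebraMap_apply A R (R ⊗[A] C) a)

end HopfAlgebroidMap

theorem hopf_map_internal_equivalence_iff
    {A Γ B Sg : Type u} [CommRing A] [CommRing Γ] [CommRing B] [CommRing Sg]
    {H : HopfAlgebroid A Γ} {K : HopfAlgebroid B Sg} (φ : HopfAlgebroidMap H K) :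
    ((∀ (R : Type u) [CommRing R] (α β : Sg →+* R),
        α.comp K.ηL = β.comp K.ηL → α.comp K.ηR = β.comp K.ηR →
        α.comp φ.f₁ = β.comp φ.f₁ → α = β) ∧
     (∀ (R : Type u) [CommRing R] (x y : B →+* R) (β : Γ →+* R),
        β.comp H.ηL = x.comp φ.f₀ → β.comp H.ηR = y.comp φ.f₀ →
        ∃ α : Sg →+* R, α.comp K.ηL = x ∧ α.comp K.ηR = y ∧ α.comp φ.f₁ = β) ∧
     FpqcEssentiallySurjective φ) ↔
    (Function.Bijective (canonicalMap φ) ∧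
     ∃ (C : CommRingCat.{u}) (g : BGamma H φ.f₀ →+* C),
       @Module.FaithfullyFlat A C _ _
         ((g.comp (unitBGamma H φ.f₀)).toAlgebra.toModule)) := by
  rw [φ.faithful_iff, φ.full_iff, ← and_assoc, ← RingHom.bijective_iff_forall_comp]
  exact Iff.rfl.and ⟨φ.exists_faithfullyFlat_of_fpqcEssentiallySurjective,
    fun ⟨_, g, hg⟩ => φ.fpqcEssentiallySurjective_of_faithfullyFlat g hg⟩
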